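/- Let φ ∈ O_K[x] be Eisenstein with root α and L = K(α). Let S be a segment of the ramification polygon of φ of slope −h/e and A its residual polynomial. Let β = δ·α with v_α(δ) = 0 be another uniformizer of L and ψ its minimal polynomial over K. If γ̄_1, …, γ̄_m are the (not necessarily distinct) zeros of A in an algebraic closure of 𝕂, then γ̄_1/δ̄^h, …, γ̄_m/δ̄^h are the zeros of the residual polynomial of the segment of slope −h/e of the ramification polygon of ψ. -/

import Mathlib

open Polynomial

namespace RamificationStmt14

variable {K L : Type*} [Field K] [Field L]

def IsEisenstein (v : AddValuation K (WithTop ℤ)) (φ : Polynomial K) : Prop :=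
  φ.Monic ∧ (∀ i < φ.natDegree, ((1 : ℤ) : WithTop ℤ) ≤ v (φ.coeff i)) ∧
    v (φ.coeff 0) = ((1 : ℤ) : WithTop ℤ)

/-- Coefficients of the ramification polynomial `ρ(x) = φ(αx+α)/α^n`. -/
noncomputable def rho [Algebra K L] (φ : Polynomial K) (α : L) (n i : ℕ) : L :=
  ∑ k ∈ Finset.Icc i n, (Nat.choose k i : L) * (algebraMap K L (φ.coeff k)) * α ^ ((k : ℤ) - (n : ℤ))

/-- The valuation ring `O_L = {x | w(x) ≥ 0}`. -/
def vintegers (w : AddValuation L (WithTop ℤ)) : Subring L where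
  carrier := {x | 0 ≤ w x}
  zero_mem' := by simp [AddValuation.map_zero]
  one_mem' := by simp [AddValuation.map_one]
  add_mem' := by
    intro a b ha hb
    exact le_trans (le_min ha hb) (w.map_add a b)
  neg_mem' := by
    intro a ha
    simpa [AddValuation.map_neg] using ha
  mul_mem' := by
    intro a b ha hb
    simp only [Set.mem_setOf_eq] at *
    rw [w.map_mul]
    exact add_nonneg ha hb

/-- `A` is the residual polynomial of the segment of the Newton polygon of the ramification
polynomial of `φ` (w.r.t. the root `α`) with endpoints `(x0,y0)`, `(x1,y1)` and slope `−h/e`,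
expressed via the section `lift : 𝕜 → K` of the residue map: each coefficient of the residual
polynomial is the residue of `ρ_{je+x0}·α^{jh−y0}`, and all points of the polygon lie on or
above the segment's line. -/
def IsSegmentWithResidual {𝕜 : Type*} [Field 𝕜] [Algebra K L]
    (w : AddValuation L (WithTop ℤ)) (lift : 𝕜 → K)
    (φ : Polynomial K) (α : L) (n : ℕ) (x0 x1 : ℕ) (y0 y1 : ℤ) (h e : ℕ)
    (A : Polynomial 𝕜) : Prop :=
  0 < x0 ∧ x0 < x1 ∧ x1 ≤ n ∧ 0 < e ∧ Nat.Coprime h e ∧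
  w (rho φ α n x0) = (y0 : WithTop ℤ) ∧ w (rho φ α n x1) = (y1 : WithTop ℤ) ∧
  (e : ℤ) * (y0 - y1) = h * ((x1 : ℤ) - x0) ∧
  (∀ m : ℕ, 1 ≤ m → m ≤ n → ∀ c : ℤ, w (rho φ α n m) = (c : WithTop ℤ) →
    (e : ℤ) * y0 - h * ((m : ℤ) - x0) ≤ (e : ℤ) * c) ∧
  A.natDegree ≤ (x1 - x0) / e ∧
  (∀ j ≤ (x1 - x0) / e,
    0 < w (rho φ α n (j * e + x0) * α ^ ((j : ℤ) * h - y0) - algebraMap K L (lift (A.coeff j))))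

end RamificationStmt14

/-!
Write `δ = g(α)` with `g ∈ 𝒪_K[x]` of degree `< n` and put `γ = x g(x)`, so that `γ(α) = β`.
Since `ψ(γ(α)) = 0`, we get `ψ ∘ γ = φ H` with `H ∈ 𝒪_K[x]` (division by the monic `φ`).
Substituting `x ↦ α(1 + x)` and dividing by `α^n` turns this into
`δ^n ρ_ψ(x Z(x)) = ρ_φ(x) G(x)`, where `Z(0) ≡ 1`, `G(0) = H(α)`, and the `t`-th coefficients
of `Z` and `G` have valuation `≥ t`. At a lattice point `m = je + x0` of the segment, every
other term of the `m`-th coefficient on either side lies strictly above the segment's line, so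
`δ^n ρ_{ψ,m} ≡ H(α) ρ_{φ,m}` modulo a higher power of `α`. Multiplying by `α^{jh - y0}` and
reducing gives `A'_j = c δ̄^{hj} A_j` with `c ≠ 0`, i.e. `A'(x) = c A(δ̄^h x)`.
-/

namespace AddValuation

variable {R : Type*} [Ring R] {Γ₀ : Type*} [LinearOrderedAddCommGroupWithTop Γ₀]
  (v : AddValuation R Γ₀)

theorem map_sum_eq_of_lt {ι : Type*} [DecidableEq ι] {s : Finset ι} {f : ι → R} {j : ι}
    (hj : j ∈ s) (hf : ∀ i ∈ s.erase j, v (f j) < v (f i)) :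
    v (∑ i ∈ s, f i) = v (f j) := by
  rw [← Finset.add_sum_erase s f hj]
  rcases eq_or_ne (v (f j)) ⊤ with htop | hne
  · have : s.erase j = ∅ :=
      Finset.eq_empty_of_forall_notMem fun i hi => by simpa [htop] using hf i hi
    rw [this, Finset.sum_empty, add_zero]
  · exact v.map_add_eq_of_lt_left (v.map_lt_sum hne hf)

theorem map_natCast_nonneg (m : ℕ) : 0 ≤ v (m : R) := by
  induction m with
  | zero => simp
  | succ k ih => exact Nat.cast_succ (R := R) k ▸ v.map_le_add ih (by simp)

end AddValuation

namespace Polynomial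

theorem divByMonic_mem_lifts {R S : Type*} [CommRing R] [CommRing S] (f : R →+* S) {p q : S[X]}
    (hp : p ∈ lifts f) (hq : q ∈ lifts f) (hmon : q.Monic) : p /ₘ q ∈ lifts f := by
  obtain ⟨p', rfl⟩ := (mem_lifts p).1 hp
  obtain ⟨q', rfl, -, hmon'⟩ := lifts_and_natDegree_eq_and_monic hq hmon
  exact (mem_lifts _).2 ⟨p' /ₘ q', map_divByMonic f hmon'⟩

theorem comp_mem_lifts {R S : Type*} [CommRing R] [CommRing S] (f : R →+* S) {p q : S[X]}
    (hp : p ∈ lifts f) (hq : q ∈ lifts f) : p.comp q ∈ lifts f := by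
  obtain ⟨p', rfl⟩ := (mem_lifts p).1 hp
  obtain ⟨q', rfl⟩ := (mem_lifts q).1 hq
  exact (mem_lifts _).2 ⟨p'.comp q', Polynomial.map_comp (f := f) p' q'⟩

theorem coeff_comp_C_mul_X_add_C {R : Type*} [CommSemiring R] (Q : R[X]) (a : R) {N : ℕ}
    (hN : Q.natDegree < N) (t : ℕ) :
    (Q.comp (C a * X + C a)).coeff t = ∑ k ∈ Finset.range N, Q.coeff k * a ^ k * k.choose t := by
  rw [show C a * X + C a = C a * (X + 1) by ring, comp_eq_sum_left,
    sum_over_range' _ (fun _ => by simp) N hN, finsetSum_coeff]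
  refine Finset.sum_congr rfl fun k _ => ?_
  rw [mul_pow, ← C_pow, ← mul_assoc, ← C_mul, coeff_C_mul, coeff_X_add_one_pow]

theorem eq_C_mul_comp_C_mul_X {𝕜 : Type*} [Field 𝕜] {A A' : 𝕜[X]} {N h : ℕ} {k : ℤ} {c d : 𝕜}
    (hd : d ≠ 0) (hA : A.natDegree ≤ N) (hA' : A'.natDegree ≤ N)
    (hcoeff : ∀ j ≤ N, d ^ (k - j * h) * A'.coeff j = c * A.coeff j) :
    A' = C (c * d ^ (-k)) * A.comp (C (d ^ h) * X) := by
  ext j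
  rw [coeff_C_mul, comp_C_mul_X_coeff]
  rcases le_or_gt j N with hj | hj
  · rw [← pow_mul, ← zpow_natCast, eq_inv_mul_iff_mul_eq₀ (zpow_ne_zero _ hd) |>.2 (hcoeff j hj),
      ← zpow_neg, show -(k - j * h) = -k + ((h * j : ℕ) : ℤ) by push_cast; ring, zpow_add₀ hd]
    ring
  · simp [coeff_eq_zero_of_natDegree_lt (hA.trans_lt hj),
      coeff_eq_zero_of_natDegree_lt (hA'.trans_lt hj)]

theorem roots_map_C_mul_comp_C_mul_X {𝕜 F : Type*} [Field 𝕜] [Field F] (f : 𝕜 →+* F)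
    (A : 𝕜[X]) {c b : 𝕜} (hc : c ≠ 0) (hb : b ≠ 0) :
    ((C c * A.comp (C b * X)).map f).roots = (A.map f).roots.map (fun z => z / f b) := by
  rw [Polynomial.map_mul, map_C, map_comp, Polynomial.map_mul, map_C, map_X,
    roots_C_mul _ ((_root_.map_ne_zero f).2 hc), ← add_zero (C (f b) * X), ← C_0,
    roots_comp_C_mul_X_add_C _ _ _ (isUnit_iff_ne_zero.2 ((_root_.map_ne_zero f).2 hb))]
  simp [Ring.inverse_eq_inv', div_eq_inv_mul]

end Polynomial

namespace RamificationStmt14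

section Valuation

variable {F : Type*} [Field F] (w : AddValuation F (WithTop ℤ))

theorem val_zpow {x : F} {c : ℤ} (hx : w x = c) (z : ℤ) :
    w (x ^ z) = ((z * c : ℤ) : WithTop ℤ) := by
  cases z with
  | ofNat k => simp [w.map_pow, hx, ← WithTop.coe_nsmul]
  | negSucc k =>
    rw [zpow_negSucc, w.map_inv, w.map_pow, hx, ← WithTop.coe_nsmul,
      ← WithTop.LinearOrderedAddCommGroup.coe_neg]
    rw [nsmul_eq_mul, Int.negSucc_eq]
    congr 1
    push_cast
    ring

theorem one_le_val_pow_sub_one {x : F} (hx : ((1 : ℤ) : WithTop ℤ) ≤ w (x - 1)) (m : ℕ) :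
    ((1 : ℤ) : WithTop ℤ) ≤ w (x ^ m - 1) := by
  have hx0 : 0 ≤ w x := by
    simpa using w.map_le_add (le_trans (by norm_num) hx) (w.map_one.ge : (0 : WithTop ℤ) ≤ w 1)
  induction m with
  | zero => simp
  | succ m ih =>
    rw [show x ^ (m + 1) - 1 = (x ^ m - 1) * x + (x - 1) by ring]
    refine w.map_le_add ?_ hx
    rw [w.map_mul]
    simpa using add_le_add ih hx0

end Valuation

theorem nonneg_of_coe_le_nsmul_add {a : WithTop ℤ} {m k : ℤ} {n : ℕ} (hkm : k - m < n)
    (h : (m : WithTop ℤ) ≤ n • a + k) : 0 ≤ a := by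
  induction a with
  | top => exact le_top
  | coe a =>
    rw [← WithTop.coe_nsmul, ← WithTop.coe_add, WithTop.coe_le_coe, nsmul_eq_mul] at h
    exact_mod_cast (show 0 ≤ a by nlinarith)

section Uniformizer

variable {K L : Type*} [Field K] [Field L] [Algebra K L]
  {v : AddValuation K (WithTop ℤ)} {w : AddValuation L (WithTop ℤ)} {n : ℕ} {b : L}

theorem val_algebraMap_mul_pow (hcompat : ∀ x : K, w (algebraMap K L x) = n • v x)
    (hb : w b = ((1 : ℤ) : WithTop ℤ)) (c : K) (k : ℕ) :
    w (algebraMap K L c * b ^ k) = n • v c + ((k : ℤ) : WithTop ℤ) := by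
  rw [w.map_mul, hcompat, w.map_pow, hb, ← WithTop.coe_nsmul, nsmul_one]

theorem eq_of_val_algebraMap_mul_pow_eq (hcompat : ∀ x : K, w (algebraMap K L x) = n • v x)
    (hb : w b = ((1 : ℤ) : WithTop ℤ)) {c d : K} {k l : ℕ} (hk : k < n) (hl : l < n)
    (hne : w (algebraMap K L c * b ^ k) ≠ ⊤)
    (heq : w (algebraMap K L c * b ^ k) = w (algebraMap K L d * b ^ l)) : k = l := by
  have hc : c ≠ 0 := by rintro rfl; simp at hne
  have hd : d ≠ 0 := by rintro rfl; simp [heq] at hne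
  obtain ⟨vc, hvc⟩ := WithTop.ne_top_iff_exists.1 ((v.ne_top_iff).2 hc)
  obtain ⟨vd, hvd⟩ := WithTop.ne_top_iff_exists.1 ((v.ne_top_iff).2 hd)
  rw [val_algebraMap_mul_pow hcompat hb, val_algebraMap_mul_pow hcompat hb, ← hvc, ← hvd,
    ← WithTop.coe_nsmul, ← WithTop.coe_nsmul, ← WithTop.coe_add, ← WithTop.coe_add,
    WithTop.coe_inj, nsmul_eq_mul, nsmul_eq_mul] at heq
  have := congrArg (· % (n : ℤ)) heq
  simp only [Int.mul_add_emod_self_left] at this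
  rwa [Int.emod_eq_of_lt (by omega) (by omega), Int.emod_eq_of_lt (by omega) (by omega),
    Nat.cast_inj] at this

/-- Below degree `n` the terms `c_k b^k` have pairwise distinct valuations (they differ mod `n`),
so the valuation of `P(b)` is the least valuation of a term. -/
theorem val_aeval_le (hcompat : ∀ x : K, w (algebraMap K L x) = n • v x)
    (hb : w b = ((1 : ℤ) : WithTop ℤ)) (P : K[X]) (hP : P.degree < n) (k : ℕ) :
    w (aeval b P) ≤ w (algebraMap K L (P.coeff k) * b ^ k) := by
  classical
  rcases eq_or_ne P 0 with rfl | hP0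
  · simp
  have hPn : P.natDegree < n := (natDegree_lt_iff_degree_lt hP0).2 hP
  rcases le_or_gt n k with hkn | hkn
  · simp [coeff_eq_zero_of_natDegree_lt (hPn.trans_le hkn)]
  set f : ℕ → L := fun i => algebraMap K L (P.coeff i) * b ^ i
  obtain ⟨i₀, hi₀, hmin⟩ :=
    (Finset.range n).exists_min_image (fun i => w (f i)) ⟨k, Finset.mem_range.2 hkn⟩
  have hsum : aeval b P = ∑ i ∈ Finset.range n, f i := by
    simp only [aeval_eq_sum_range' hPn, Algebra.smul_def, f]
  rcases eq_or_ne (w (f i₀)) ⊤ with htop | hne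
  · rw [htop] at hmin
    rw [top_le_iff.1 (hmin k (Finset.mem_range.2 hkn))]
    exact le_top
  rw [hsum, w.map_sum_eq_of_lt hi₀ fun i hi => ?_]
  · exact hmin k (Finset.mem_range.2 hkn)
  refine lt_of_le_of_ne (hmin i (Finset.mem_of_mem_erase hi)) fun heq => ?_
  exact Finset.ne_of_mem_erase hi (eq_of_val_algebraMap_mul_pow_eq hcompat hb
    (Finset.mem_range.1 (Finset.mem_of_mem_erase hi)) (Finset.mem_range.1 hi₀) (heq ▸ hne) heq.symm)

theorem eq_zero_of_aeval_eq_zero (hcompat : ∀ x : K, w (algebraMap K L x) = n • v x)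
    (hb : w b = ((1 : ℤ) : WithTop ℤ)) {P : K[X]} (hP : P.degree < n) (h : aeval b P = 0) :
    P = 0 := by
  have hb0 : b ≠ 0 := by rintro rfl; simp at hb
  ext k
  have := val_aeval_le hcompat hb P hP k
  rw [h, w.map_zero, top_le_iff, AddValuation.top_iff] at this
  simpa [hb0] using this

theorem coeff_nonneg_of_val_aeval_nonneg (hcompat : ∀ x : K, w (algebraMap K L x) = n • v x)
    (hb : w b = ((1 : ℤ) : WithTop ℤ)) {P : K[X]} (hP : P.degree < n) (h : 0 ≤ w (aeval b P))
    (k : ℕ) : 0 ≤ v (P.coeff k) := by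
  rcases lt_or_ge k n with hkn | hkn
  · refine nonneg_of_coe_le_nsmul_add (m := 0) (k := k) (n := n) (by omega) ?_
    rw [← val_algebraMap_mul_pow hcompat hb]
    exact h.trans (val_aeval_le hcompat hb P hP k)
  · rw [coeff_eq_zero_of_degree_lt (hP.trans_le (by exact_mod_cast hkn)), v.map_zero]
    exact le_top

theorem coeff_nonneg_of_monic_of_aeval_eq_zero (hcompat : ∀ x : K, w (algebraMap K L x) = n • v x)
    (hb : w b = ((1 : ℤ) : WithTop ℤ)) {P : K[X]} (hmon : P.Monic)
    (hdeg : P.natDegree ≤ n) (h : aeval b P = 0) (k : ℕ) : 0 ≤ v (P.coeff k) := by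
  rcases lt_trichotomy k P.natDegree with hk | rfl | hk
  · have hsplit : aeval b P.eraseLead = -b ^ P.natDegree := by
      rw [eq_neg_iff_add_eq_zero, ← h]
      conv_rhs => rw [← P.eraseLead_add_C_mul_X_pow]
      simp [hmon.leadingCoeff]
    have hlt : P.eraseLead.degree < n :=
      (degree_eraseLead_lt hmon.ne_zero).trans_le
        ((degree_le_natDegree).trans (by exact_mod_cast hdeg))
    refine nonneg_of_coe_le_nsmul_add (m := P.natDegree) (k := k) (n := n) (by omega) ?_
    rw [← eraseLead_coeff_of_ne k hk.ne, ← val_algebraMap_mul_pow hcompat hb]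
    refine le_of_eq_of_le ?_ (val_aeval_le hcompat hb _ hlt k)
    rw [hsplit, w.map_neg, w.map_pow, hb, ← WithTop.coe_nsmul, nsmul_one]
  · simp [hmon.coeff_natDegree]
  · simp [coeff_eq_zero_of_natDegree_lt hk]

end Uniformizer

/-- Polynomials over `𝒪_K` are handled as `lifts (vintegers v).subtype`, which is closed under
the ring operations, composition and division by monic elements. -/
theorem mem_lifts_vintegers_iff {K : Type*} [Field K] {v : AddValuation K (WithTop ℤ)} (P : K[X]) :
    P ∈ lifts (vintegers v).subtype ↔ ∀ k, 0 ≤ v (P.coeff k) := by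
  simp only [lifts_iff_coeff_lifts, Subring.coe_subtype, Subtype.range_coe_subtype]
  rfl

section Substitution

variable {K L : Type*} [Field K] [Field L] [Algebra K L]

theorem coeff_map_comp_eq_pow_mul_rho {n : ℕ} {q : K[X]} (hq : q.natDegree ≤ n) {a : L}
    (ha : a ≠ 0) (i : ℕ) :
    ((q.map (algebraMap K L)).comp (C a * X + C a)).coeff i = a ^ n * rho q a n i := by
  rw [coeff_comp_C_mul_X_add_C _ _ ((natDegree_map_le).trans_lt (Nat.lt_succ_of_le hq)), rho,
    Finset.mul_sum, ← Finset.sum_subset fun k hk =>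
      Finset.mem_range.2 (Nat.lt_succ_of_le (Finset.mem_Icc.1 hk).2)]
  · refine Finset.sum_congr rfl fun k _ => ?_
    rw [coeff_map, show a ^ k = a ^ n * a ^ ((k : ℤ) - n) by
      rw [← zpow_natCast, ← zpow_natCast, ← zpow_add₀ ha]; congr 1; ring]
    ring
  · intro k hkn hk
    simp only [Finset.mem_range, Finset.mem_Icc] at hkn hk
    simp [Nat.choose_eq_zero_of_lt (by omega : k < i)]

theorem rho_zero_eq_zero {n : ℕ} {q : K[X]} (hq : q.natDegree ≤ n) {a : L} (ha : a ≠ 0)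
    (hroot : aeval a q = 0) : rho q a n 0 = 0 := by
  have h := coeff_map_comp_eq_pow_mul_rho hq ha 0
  rw [coeff_zero_eq_eval_zero, eval_comp] at h
  simp only [eval_add, eval_mul, eval_C, eval_X, mul_zero, zero_add, eval_map_algebraMap,
    hroot] at h
  exact (mul_eq_zero.1 h.symm).resolve_left (pow_ne_zero n ha)

end Substitution

theorem IsEisenstein.mem_lifts {K : Type*} [Field K] {v : AddValuation K (WithTop ℤ)}
    {φ : K[X]} (hφ : IsEisenstein v φ) : φ ∈ lifts (vintegers v).subtype := by
  refine (mem_lifts_vintegers_iff φ).2 fun k => ?_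
  rcases lt_trichotomy k φ.natDegree with hk | rfl | hk
  · exact le_trans (by norm_num) (hφ.2.1 k hk)
  · simp [hφ.1.coeff_natDegree]
  · simp [coeff_eq_zero_of_natDegree_lt hk]

section Factorization

variable {K L : Type*} [Field K] [Field L] [Algebra K L]
  {v : AddValuation K (WithTop ℤ)} {w : AddValuation L (WithTop ℤ)} {n : ℕ}

theorem exists_comp_eq_mul (hcompat : ∀ x : K, w (algebraMap K L x) = n • v x) {α : L}
    (hα : w α = ((1 : ℤ) : WithTop ℤ)) (hgen : Algebra.adjoin K {α} = ⊤) {φ : K[X]}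
    (hmon : φ.Monic) (hφ : φ ∈ lifts (vintegers v).subtype) (hdeg : φ.natDegree = n)
    (hroot : aeval α φ = 0) {δ : L} (hδ : 0 ≤ w δ) {ψ : K[X]}
    (hψ : ψ ∈ lifts (vintegers v).subtype) (hψroot : aeval (δ * α) ψ = 0) :
    ∃ γ H : K[X], γ ∈ lifts (vintegers v).subtype ∧ H ∈ lifts (vintegers v).subtype ∧
      γ.coeff 0 = 0 ∧ aeval α γ = δ * α ∧ ψ.comp γ = φ * H := by
  have hφdeg : φ.degree = n := by rw [degree_eq_natDegree hmon.ne_zero, hdeg]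
  obtain ⟨G, hG⟩ : δ ∈ (aeval α).range := by
    rw [← Algebra.adjoin_singleton_eq_range_aeval K α, hgen]
    trivial
  have hgα : aeval α (G %ₘ φ) = δ := by rw [aeval_modByMonic_eq_self_of_root hroot]; exact hG
  have hg : G %ₘ φ ∈ lifts (vintegers v).subtype :=
    (mem_lifts_vintegers_iff _).2 (coeff_nonneg_of_val_aeval_nonneg hcompat hα
      (hφdeg ▸ degree_modByMonic_lt G hmon) (hgα ▸ hδ))
  set γ := X * (G %ₘ φ)
  have hγα : aeval α γ = δ * α := by simp [γ, hgα, mul_comm]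
  have hdvd : (ψ.comp γ) %ₘ φ = 0 := by
    refine eq_zero_of_aeval_eq_zero hcompat hα (hφdeg ▸ degree_modByMonic_lt _ hmon) ?_
    rw [aeval_modByMonic_eq_self_of_root hroot, aeval_comp, hγα, hψroot]
  refine ⟨γ, ψ.comp γ /ₘ φ, mul_mem (X_mem_lifts _) hg,
    divByMonic_mem_lifts _ (comp_mem_lifts _ hψ (mul_mem (X_mem_lifts _) hg)) hφ hmon,
    by simp [γ], hγα, ?_⟩
  simpa [hdvd] using (modByMonic_add_div (ψ.comp γ) φ).symm

end Factorization

section CoeffVal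

variable {L : Type*} [Field L] (w : AddValuation L (WithTop ℤ))

/-- Equivalently, `P ∈ 𝒪_L[π_L x]` for a uniformizer `π_L`. -/
def CoeffValGeIndex (P : L[X]) : Prop :=
  ∀ t : ℕ, ((t : ℤ) : WithTop ℤ) ≤ w (P.coeff t)

variable {w}

theorem CoeffValGeIndex.mul {P Q : L[X]} (hP : CoeffValGeIndex w P) (hQ : CoeffValGeIndex w Q) :
    CoeffValGeIndex w (P * Q) := by
  intro t
  rw [coeff_mul]
  refine w.map_le_sum fun p hp => ?_
  rw [w.map_mul, ← Finset.HasAntidiagonal.mem_antidiagonal.1 hp, Nat.cast_add, WithTop.coe_add]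
  exact add_le_add (hP p.1) (hQ p.2)

theorem CoeffValGeIndex.pow {P : L[X]} (hP : CoeffValGeIndex w P) (i : ℕ) :
    CoeffValGeIndex w (P ^ i) := by
  induction i with
  | zero =>
    intro t
    rcases eq_or_ne t 0 with rfl | ht
    · simp
    · simp [coeff_one, ht]
  | succ i ih => exact pow_succ P i ▸ ih.mul hP

theorem coeffValGeIndex_comp {Q : L[X]} (hQ : ∀ k, 0 ≤ w (Q.coeff k)) {a : L}
    (ha : w a = ((1 : ℤ) : WithTop ℤ)) : CoeffValGeIndex w (Q.comp (C a * X + C a)) := by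
  intro t
  rw [coeff_comp_C_mul_X_add_C Q a (lt_add_one _)]
  refine w.map_le_sum fun k _ => ?_
  rcases lt_or_ge k t with hkt | hkt
  · simp [Nat.choose_eq_zero_of_lt hkt]
  · rw [w.map_mul, w.map_mul, w.map_pow, ha, ← WithTop.coe_nsmul, nsmul_one]
    calc ((t : ℤ) : WithTop ℤ) ≤ 0 + ((k : ℤ) : WithTop ℤ) + 0 := by simpa using hkt
      _ ≤ _ := add_le_add (add_le_add_left (hQ k) _) (w.map_natCast_nonneg _)

theorem two_le_val_coeff_one_comp_sub_eval {Q : L[X]} (hQ : ∀ k, 0 ≤ w (Q.coeff k))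
    (hQ0 : Q.coeff 0 = 0) {a : L} (ha : w a = ((1 : ℤ) : WithTop ℤ)) :
    ((2 : ℤ) : WithTop ℤ) ≤ w ((Q.comp (C a * X + C a)).coeff 1 - Q.eval a) := by
  rw [coeff_comp_C_mul_X_add_C Q a (lt_add_one _), eval_eq_sum_range, ← Finset.sum_sub_distrib]
  refine w.map_le_sum fun k _ => ?_
  match k with
  | 0 => simp [hQ0]
  | 1 => simp
  | k + 2 =>
    rw [Nat.choose_one_right, ← mul_sub_one, show ((k + 2 : ℕ) : L) - 1 = (k + 1 : ℕ) by
      push_cast; ring, w.map_mul, w.map_mul, w.map_pow, ha, ← WithTop.coe_nsmul, nsmul_one]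
    calc ((2 : ℤ) : WithTop ℤ) ≤ 0 + (((k + 2 : ℕ) : ℤ) : WithTop ℤ) + 0 := by
          simp only [zero_add, add_zero, WithTop.coe_le_coe]; omega
      _ ≤ _ := add_le_add (add_le_add_left (hQ _) _) (w.map_natCast_nonneg _)

end CoeffVal

section Polygon

variable {L : Type*} [Field L]

/-- The points `(m, w(R m))`, `1 ≤ m ≤ n`, lie on or above the line of slope `-h/e`
through `(x0, y0)`. -/
def LiesAboveLine (w : AddValuation L (WithTop ℤ)) (R : ℕ → L) (n e h x0 : ℕ) (y0 : ℤ) : Prop :=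
  ∀ m : ℕ, 1 ≤ m → m ≤ n → ∀ c : ℤ, w (R m) = (c : WithTop ℤ) →
    (e : ℤ) * y0 - h * ((m : ℤ) - x0) ≤ (e : ℤ) * c

variable {w : AddValuation L (WithTop ℤ)} {R : ℕ → L} {n e h x0 : ℕ} {y0 : ℤ}

theorem LiesAboveLine.coe_le_val (hR : LiesAboveLine w R n e h x0 y0) (he : 0 < e) {j : ℕ}
    (hm : 1 ≤ j * e + x0) (hmn : j * e + x0 ≤ n) :
    ((y0 - j * h : ℤ) : WithTop ℤ) ≤ w (R (j * e + x0)) := by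
  induction hc : w (R (j * e + x0)) with
  | top => exact le_top
  | coe c =>
    have := hR _ hm hmn c hc
    push_cast at this
    exact WithTop.coe_le_coe.2 (by nlinarith)

theorem LiesAboveLine.coe_add_one_le (hR : LiesAboveLine w R n e h x0 y0) (he : 0 < e)
    {i d j : ℕ} (hi : 1 ≤ i) (hin : i ≤ n) (hd : 1 ≤ d) (hid : i + d = j * e + x0) :
    ((y0 - j * h + 1 : ℤ) : WithTop ℤ) ≤ ((d : ℤ) : WithTop ℤ) + w (R i) := by
  induction hc : w (R i) with
  | top => simp
  | coe c =>
    have := hR i hi hin c hc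
    have hid' : (i : ℤ) + d = j * e + x0 := by exact_mod_cast hid
    rw [← WithTop.coe_add, WithTop.coe_le_coe]
    nlinarith

theorem LiesAboveLine.const_mul (hR : LiesAboveLine w R n e h x0 y0) {a : L} {k : ℤ}
    (ha : w a = (k : WithTop ℤ)) : LiesAboveLine w (fun i => a * R i) n e h x0 (y0 + k) := by
  intro m hm hmn c hc
  rw [w.map_mul, ha] at hc
  induction hc' : w (R m) with
  | top => simp [hc'] at hc
  | coe c' =>
    rw [hc', ← WithTop.coe_add, WithTop.coe_inj] at hc
    have := hR m hm hmn c' hc'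
    subst hc
    linarith

end Polygon

section CoeffComparison

variable {L : Type*} [Field L] {w : AddValuation L (WithTop ℤ)} {n e h x0 : ℕ} {y0 : ℤ}
  {j : ℕ}

theorem val_coeff_mul_sub_ge (he : 0 < e) (hmn : j * e + x0 ≤ n) {R G : L[X]}
    (hR : LiesAboveLine w R.coeff n e h x0 y0)
    (hR0 : R.coeff 0 = 0) (hG : CoeffValGeIndex w G) :
    ((y0 - j * h + 1 : ℤ) : WithTop ℤ) ≤
      w ((R * G).coeff (j * e + x0) - R.coeff (j * e + x0) * G.coeff 0) := by
  set m := j * e + x0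
  have hm0 : (m, 0) ∈ Finset.HasAntidiagonal.antidiagonal m :=
    Finset.HasAntidiagonal.mem_antidiagonal.2 rfl
  rw [coeff_mul, ← Finset.add_sum_erase _ _ hm0, add_sub_cancel_left]
  refine w.map_le_sum fun p hp => ?_
  obtain ⟨hne, hp⟩ := Finset.mem_erase.1 hp
  rw [Finset.HasAntidiagonal.mem_antidiagonal] at hp
  have hp2 : 1 ≤ p.2 := by
    rcases p with ⟨a, b⟩
    simp only [ne_eq, Prod.mk.injEq] at hne hp ⊢
    omega
  rcases Nat.eq_zero_or_pos p.1 with h0 | h0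
  · simp [h0, hR0]
  · rw [w.map_mul]
    exact ((hR.coe_add_one_le he h0 (by omega) hp2 hp).trans (add_le_add_left (hG _) _)).trans_eq
      (add_comm _ _)

theorem val_coeff_comp_sub_ge (he : 0 < e) (hm : 1 ≤ j * e + x0) (hmn : j * e + x0 ≤ n)
    {S Z : L[X]} (hS : LiesAboveLine w S.coeff n e h x0 y0)
    (hS0 : S.coeff 0 = 0) (hZ : CoeffValGeIndex w Z)
    (hZ0 : ((1 : ℤ) : WithTop ℤ) ≤ w (Z.coeff 0 - 1)) :
    ((y0 - j * h + 1 : ℤ) : WithTop ℤ) ≤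
      w ((S.comp (X * Z)).coeff (j * e + x0) - S.coeff (j * e + x0)) := by
  set m := j * e + x0
  set N := S.natDegree + m + 1
  have hmN : m ∈ Finset.range N := Finset.mem_range.2 (by omega)
  have hterm : ∀ i, (C (S.coeff i) * (X * Z) ^ i).coeff m =
      S.coeff i * if i ≤ m then (Z ^ i).coeff (m - i) else 0 := fun i => by
    rw [coeff_C_mul, mul_pow, coeff_X_pow_mul']
  rw [comp_eq_sum_left, sum_over_range' _ (fun _ => by simp) N (by omega), finsetSum_coeff,
    ← Finset.add_sum_erase _ _ hmN, hterm, if_pos le_rfl, Nat.sub_self, coeff_zero_eq_eval_zero,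
    eval_pow, ← coeff_zero_eq_eval_zero, add_sub_right_comm, ← mul_sub_one]
  refine w.map_le_add ?_ (w.map_le_sum fun i hi => ?_)
  · rw [w.map_mul, WithTop.coe_add]
    exact add_le_add (hS.coe_le_val he hm hmn) (one_le_val_pow_sub_one w hZ0 m)
  obtain ⟨hne, -⟩ := Finset.mem_erase.1 hi
  rw [hterm]
  rcases lt_or_ge m i with hmi | him
  · simp [if_neg hmi.not_ge]
  rcases Nat.eq_zero_or_pos i with h0 | h0
  · simp [h0, hS0]
  · rw [if_pos him, w.map_mul]
    exact ((hS.coe_add_one_le (j := j) (d := m - i) he h0 (by omega) (by omega) (by omega)).trans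
      (add_le_add_left (by exact_mod_cast hZ.pow i (m - i)) _)).trans_eq (add_comm _ _)

theorem val_coeff_sub_ge_of_comp_eq_mul (he : 0 < e) (hm : 1 ≤ j * e + x0)
    (hmn : j * e + x0 ≤ n) {R S G Z : L[X]} (hR : LiesAboveLine w R.coeff n e h x0 y0)
    (hR0 : R.coeff 0 = 0) (hS : LiesAboveLine w S.coeff n e h x0 y0) (hS0 : S.coeff 0 = 0)
    (hG : CoeffValGeIndex w G) (hZ : CoeffValGeIndex w Z)
    (hZ0 : ((1 : ℤ) : WithTop ℤ) ≤ w (Z.coeff 0 - 1)) (hid : S.comp (X * Z) = R * G) :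
    ((y0 - j * h + 1 : ℤ) : WithTop ℤ) ≤
      w (S.coeff (j * e + x0) - G.coeff 0 * R.coeff (j * e + x0)) := by
  have := w.map_le_sub (val_coeff_mul_sub_ge he hmn hR hR0 hG)
    (hid ▸ val_coeff_comp_sub_ge he hm hmn hS hS0 hZ hZ0)
  rwa [sub_sub_sub_cancel_left, mul_comm (R.coeff _)] at this

end CoeffComparison

section RhoCongruence

variable {K L : Type*} [Field K] [Field L] [Algebra K L]
  {v : AddValuation K (WithTop ℤ)} {w : AddValuation L (WithTop ℤ)} {n : ℕ}

theorem coeff_nonneg_of_mem_lifts (hcompat : ∀ x : K, w (algebraMap K L x) = n • v x) {q : K[X]}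
    (hq : q ∈ lifts (vintegers v).subtype) (k : ℕ) :
    0 ≤ w ((q.map (algebraMap K L)).coeff k) := by
  rw [coeff_map, hcompat]
  exact nsmul_nonneg ((mem_lifts_vintegers_iff q).1 hq k) n

theorem val_aeval_nonneg (hcompat : ∀ x : K, w (algebraMap K L x) = n • v x) {q : K[X]}
    (hq : q ∈ lifts (vintegers v).subtype) {x : L} (hx : 0 ≤ w x) : 0 ≤ w (aeval x q) := by
  rw [aeval_eq_sum_range]
  refine w.map_le_sum fun k _ => ?_
  rw [Algebra.smul_def, w.map_mul, w.map_pow, hcompat]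
  exact add_nonneg (nsmul_nonneg ((mem_lifts_vintegers_iff q).1 hq k) n) (nsmul_nonneg hx k)

theorem exists_comp_X_mul_eq (hcompat : ∀ x : K, w (algebraMap K L x) = n • v x) {α β : L}
    (hα : w α = ((1 : ℤ) : WithTop ℤ)) (hβ : w β = ((1 : ℤ) : WithTop ℤ)) {γ : K[X]}
    (hγ : γ ∈ lifts (vintegers v).subtype) (hγ0 : γ.coeff 0 = 0) (hγα : aeval α γ = β) :
    ∃ Z : L[X], CoeffValGeIndex w Z ∧ ((1 : ℤ) : WithTop ℤ) ≤ w (Z.coeff 0 - 1) ∧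
      (C β * X + C β).comp (X * Z) = (γ.map (algebraMap K L)).comp (C α * X + C α) := by
  set W := (γ.map (algebraMap K L)).comp (C α * X + C α)
  have hβ0 : β ≠ 0 := by rintro rfl; simp at hβ
  have hW0 : W.coeff 0 = β := by simp [W, coeff_zero_eq_eval_zero, eval_map_algebraMap, hγα]
  have hβinv : w β⁻¹ = ((-1 : ℤ) : WithTop ℤ) := by rw [w.map_inv, hβ]; rfl
  have hγint := coeff_nonneg_of_mem_lifts hcompat hγ
  refine ⟨C β⁻¹ * W.divX, fun t => ?_, ?_, ?_⟩
  · rw [coeff_C_mul, coeff_divX, w.map_mul, hβinv]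
    calc ((t : ℤ) : WithTop ℤ) = ((-1 : ℤ) : WithTop ℤ) + (((t + 1 : ℕ) : ℤ) : WithTop ℤ) := by
          norm_cast; omega
      _ ≤ _ := add_le_add le_rfl (coeffValGeIndex_comp hγint hα _)
  · have h2 := two_le_val_coeff_one_comp_sub_eval hγint (by simpa using hγ0) hα
    rw [eval_map_algebraMap, hγα] at h2
    rw [coeff_C_mul, coeff_divX, show β⁻¹ * W.coeff (0 + 1) - 1 = β⁻¹ * (W.coeff 1 - β) by
      field_simp, w.map_mul, hβinv]
    calc ((1 : ℤ) : WithTop ℤ) = ((-1 : ℤ) : WithTop ℤ) + ((2 : ℤ) : WithTop ℤ) := by norm_cast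
      _ ≤ _ := add_le_add le_rfl h2
  · conv_rhs => rw [← divX_mul_X_add W, hW0]
    simp only [add_comp, mul_comp, C_comp, X_comp]
    rw [mul_left_comm X, ← mul_assoc, ← C_mul, mul_inv_cancel₀ hβ0, C_1, one_mul, mul_comm X]

theorem val_rho_sub_ge (hcompat : ∀ x : K, w (algebraMap K L x) = n • v x) {α δ : L}
    (hα : w α = ((1 : ℤ) : WithTop ℤ)) (hδ : w δ = 0) {φ ψ γ H : K[X]}
    (hφdeg : φ.natDegree ≤ n) (hψdeg : ψ.natDegree ≤ n) (hφroot : aeval α φ = 0)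
    (hψroot : aeval (δ * α) ψ = 0) (hγ : γ ∈ lifts (vintegers v).subtype)
    (hH : H ∈ lifts (vintegers v).subtype) (hγ0 : γ.coeff 0 = 0) (hγα : aeval α γ = δ * α)
    (hfac : ψ.comp γ = φ * H) {e h x0 : ℕ} {y0 : ℤ}
    (hφline : LiesAboveLine w (rho φ α n) n e h x0 y0)
    (hψline : LiesAboveLine w (rho ψ (δ * α) n) n e h x0 y0) (he : 0 < e) {j : ℕ}
    (hm : 1 ≤ j * e + x0) (hmn : j * e + x0 ≤ n) :
    ((y0 - j * h + 1 : ℤ) : WithTop ℤ) ≤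
      w (δ ^ n * rho ψ (δ * α) n (j * e + x0) - aeval α H * rho φ α n (j * e + x0)) := by
  set β := δ * α
  have hα0 : α ≠ 0 := by rintro rfl; simp at hα
  have hβ : w β = ((1 : ℤ) : WithTop ℤ) := by simp [β, w.map_mul, hδ, hα]
  have hβ0 : β ≠ 0 := by rintro h; simp [h] at hβ
  have hpow {x : L} (hx : w x = ((1 : ℤ) : WithTop ℤ)) : w (x ^ n) = ((n : ℤ) : WithTop ℤ) := by
    rw [w.map_pow, hx, ← WithTop.coe_nsmul, nsmul_one]
  set R := (φ.map (algebraMap K L)).comp (C α * X + C α)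
  set S := (ψ.map (algebraMap K L)).comp (C β * X + C β)
  set G := (H.map (algebraMap K L)).comp (C α * X + C α)
  have hR := coeff_map_comp_eq_pow_mul_rho hφdeg hα0
  have hS := coeff_map_comp_eq_pow_mul_rho hψdeg hβ0
  have hRline : LiesAboveLine w R.coeff n e h x0 (y0 + n) :=
    (funext hR).symm ▸ hφline.const_mul (hpow hα)
  have hSline : LiesAboveLine w S.coeff n e h x0 (y0 + n) :=
    (funext hS).symm ▸ hψline.const_mul (hpow hβ)
  have hR0 : R.coeff 0 = 0 := by rw [hR, rho_zero_eq_zero hφdeg hα0 hφroot, mul_zero]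
  have hS0 : S.coeff 0 = 0 := by rw [hS, rho_zero_eq_zero hψdeg hβ0 hψroot, mul_zero]
  have hG0 : G.coeff 0 = aeval α H := by
    simp [G, coeff_zero_eq_eval_zero, eval_map_algebraMap]
  obtain ⟨Z, hZ, hZ0, hZcomp⟩ := exists_comp_X_mul_eq hcompat hα hβ hγ hγ0 hγα
  have hid : S.comp (X * Z) = R * G := by
    rw [comp_assoc, hZcomp, ← comp_assoc, ← Polynomial.map_comp, hfac, Polynomial.map_mul,
      mul_comp]
  have key := val_coeff_sub_ge_of_comp_eq_mul he hm hmn hRline hR0 hSline hS0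
    (coeffValGeIndex_comp (coeff_nonneg_of_mem_lifts hcompat hH) hα) hZ hZ0 hid
  rw [hS, hR, hG0, show β ^ n = α ^ n * δ ^ n by ring,
    show α ^ n * δ ^ n * rho ψ β n (j * e + x0) - aeval α H * (α ^ n * rho φ α n (j * e + x0)) =
      α ^ n * (δ ^ n * rho ψ β n (j * e + x0) - aeval α H * rho φ α n (j * e + x0)) by ring,
    w.map_mul, hpow hα, show y0 + n - j * h + 1 = n + (y0 - j * h + 1) by ring,
    WithTop.coe_add, WithTop.add_le_add_iff_left WithTop.coe_ne_top] at key
  exact key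

theorem exists_val_rho_sub_ge (hcompat : ∀ x : K, w (algebraMap K L x) = n • v x) (hn : 0 < n)
    (hfinrank : Module.finrank K L = n) {α δ : L} (hα : w α = ((1 : ℤ) : WithTop ℤ))
    (hδ : w δ = 0) (hgen : Algebra.adjoin K {α} = ⊤) {φ : K[X]} (hEis : IsEisenstein v φ)
    (hdeg : φ.natDegree = n) (hroot : aeval α φ = 0) {e h x0 : ℕ} {y0 : ℤ}
    (hφline : LiesAboveLine w (rho φ α n) n e h x0 y0)
    (hψline : LiesAboveLine w (rho (minpoly K (δ * α)) (δ * α) n) n e h x0 y0) (he : 0 < e) :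
    ∃ c : L, 0 ≤ w c ∧ ∀ j : ℕ, 1 ≤ j * e + x0 → j * e + x0 ≤ n →
      ((y0 - j * h + 1 : ℤ) : WithTop ℤ) ≤
        w (δ ^ n * rho (minpoly K (δ * α)) (δ * α) n (j * e + x0) -
          c * rho φ α n (j * e + x0)) := by
  have : FiniteDimensional K L := Module.finite_of_finrank_pos (hfinrank ▸ hn)
  have hψdeg : (minpoly K (δ * α)).natDegree ≤ n := hfinrank ▸ minpoly.natDegree_le _
  have hψroot := minpoly.aeval K (δ * α)
  have hβ : w (δ * α) = ((1 : ℤ) : WithTop ℤ) := by simp [w.map_mul, hδ, hα]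
  have hψ : minpoly K (δ * α) ∈ lifts (vintegers v).subtype :=
    (mem_lifts_vintegers_iff _).2 (coeff_nonneg_of_monic_of_aeval_eq_zero hcompat hβ
      (minpoly.monic (.of_finite K _)) hψdeg hψroot)
  obtain ⟨γ, H, hγ, hH, hγ0, hγα, hfac⟩ :=
    exists_comp_eq_mul hcompat hα hgen hEis.1 hEis.mem_lifts hdeg hroot hδ.ge hψ hψroot
  exact ⟨aeval α H, val_aeval_nonneg hcompat hH (by rw [hα]; norm_num), fun j hm hmn =>
    val_rho_sub_ge hcompat hα hδ hdeg.le hψdeg hroot hψroot hγ hH hγ0 hγα hfac hφline hψline he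
      hm hmn⟩

end RhoCongruence

section Residue

variable {L 𝕜 : Type*} [Field L] [Field 𝕜] {w : AddValuation L (WithTop ℤ)}

def HasResidue (res : vintegers w →+* 𝕜) (x : L) (r : 𝕜) : Prop :=
  ∃ hx : x ∈ vintegers w, res ⟨x, hx⟩ = r

variable {res : vintegers w →+* 𝕜} {x y : L} {r s : 𝕜}

theorem HasResidue.unique (hr : HasResidue res x r) (hs : HasResidue res x s) : r = s := by
  obtain ⟨_, rfl⟩ := hr
  obtain ⟨_, rfl⟩ := hs
  rfl

theorem HasResidue.mul (hx : HasResidue res x r) (hy : HasResidue res y s) :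
    HasResidue res (x * y) (r * s) := by
  obtain ⟨hx, rfl⟩ := hx
  obtain ⟨hy, rfl⟩ := hy
  exact ⟨mul_mem hx hy, map_mul res ⟨x, hx⟩ ⟨y, hy⟩⟩

theorem HasResidue.pow (hx : HasResidue res x r) (k : ℕ) : HasResidue res (x ^ k) (r ^ k) := by
  obtain ⟨hx, rfl⟩ := hx
  exact ⟨pow_mem hx k, map_pow res ⟨x, hx⟩ k⟩

theorem HasResidue.inv (hx : HasResidue res x r) (hw : w x = 0) : HasResidue res x⁻¹ r⁻¹ := by
  have hx0 : x ≠ 0 := by rintro rfl; simp at hw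
  have hmem : x⁻¹ ∈ vintegers w := by
    show 0 ≤ w x⁻¹
    rw [w.map_inv, hw, neg_zero]
  obtain ⟨hx, rfl⟩ := hx
  refine ⟨hmem, eq_inv_of_mul_eq_one_left ?_⟩
  rw [← map_mul, ← map_one res]
  exact congrArg res (Subtype.ext (inv_mul_cancel₀ hx0))

theorem HasResidue.zpow (hx : HasResidue res x r) (hw : w x = 0) (z : ℤ) :
    HasResidue res (x ^ z) (r ^ z) := by
  cases z with
  | ofNat k => simpa using hx.pow k
  | negSucc k =>
    simpa [zpow_negSucc] using (hx.pow (k + 1)).inv (by simp [w.map_pow, hw])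

theorem HasResidue.ne_zero (hres_ker : ∀ x : vintegers w, res x = 0 ↔ 0 < w (x : L))
    (hx : HasResidue res x r) (hw : w x = 0) : r ≠ 0 := by
  obtain ⟨hx, rfl⟩ := hx
  rw [Ne, hres_ker ⟨x, hx⟩, hw]
  exact lt_irrefl 0

theorem HasResidue.of_val_sub_pos (hres_ker : ∀ x : vintegers w, res x = 0 ↔ 0 < w (x : L))
    (hy : HasResidue res y r) (hxy : 0 < w (x - y)) :
    HasResidue res x r := by
  obtain ⟨hy, rfl⟩ := hy
  have hsub : x - y ∈ vintegers w := hxy.le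
  have hx : x ∈ vintegers w := by simpa using add_mem hsub hy
  refine ⟨hx, ?_⟩
  rw [← sub_eq_zero, ← map_sub]
  exact (hres_ker _).2 hxy

theorem HasResidue.eq_of_val_sub_pos (hres_ker : ∀ x : vintegers w, res x = 0 ↔ 0 < w (x : L))
    (hx : HasResidue res x r) (hy : HasResidue res y s)
    (hxy : 0 < w (x - y)) : r = s :=
  hx.unique (hy.of_val_sub_pos hres_ker hxy)

theorem residue_eq_of_congr (hres_ker : ∀ x : vintegers w, res x = 0 ↔ 0 < w (x : L))
    {α δ a b c : L} {d t : 𝕜} {n : ℕ} {z : ℤ} (hα : w α = ((1 : ℤ) : WithTop ℤ))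
    (hδ : w δ = 0) (hδd : HasResidue res δ d) (hct : HasResidue res c t)
    (har : HasResidue res (a * α ^ z) r) (hbs : HasResidue res (b * (δ * α) ^ z) s)
    (hcong : ((1 - z : ℤ) : WithTop ℤ) ≤ w (δ ^ n * b - c * a)) :
    d ^ ((n : ℤ) - z) * s = t * r := by
  have hδ0 : δ ≠ 0 := by rintro rfl; simp at hδ
  have hpos : 0 < w (δ ^ ((n : ℤ) - z) * (b * (δ * α) ^ z) - c * (a * α ^ z)) := by
    rw [show δ ^ ((n : ℤ) - z) * (b * (δ * α) ^ z) - c * (a * α ^ z) =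
        (δ ^ n * b - c * a) * α ^ z by
      rw [mul_zpow, zpow_sub₀ hδ0, zpow_natCast]; field_simp, w.map_mul, val_zpow w hα, mul_one]
    calc (0 : WithTop ℤ) < ((1 - z : ℤ) : WithTop ℤ) + (z : WithTop ℤ) := by norm_cast; omega
      _ ≤ _ := add_le_add hcong le_rfl
  exact ((hδd.zpow hδ _).mul hbs).eq_of_val_sub_pos hres_ker (hct.mul har) hpos

end Residue

theorem roots_map_eq_of_coeff {𝕜 F : Type*} [Field 𝕜] [Field F] (f : 𝕜 →+* F) {A A' : 𝕜[X]}
    {N h : ℕ} {k : ℤ} {c d : 𝕜} (hd : d ≠ 0) (hA'0 : A'.coeff 0 ≠ 0) (hA : A.natDegree ≤ N)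
    (hA' : A'.natDegree ≤ N) (hcoeff : ∀ j ≤ N, d ^ (k - j * h) * A'.coeff j = c * A.coeff j) :
    (A'.map f).roots = (A.map f).roots.map (fun z => z / f d ^ h) := by
  have hA'eq := eq_C_mul_comp_C_mul_X hd hA hA' hcoeff
  have hc : c * d ^ (-k) ≠ 0 := by
    rintro hc
    rw [hA'eq, hc, C_0, zero_mul, coeff_zero] at hA'0
    exact hA'0 rfl
  rw [hA'eq, roots_map_C_mul_comp_C_mul_X f A hc (pow_ne_zero h hd), map_pow]

end RamificationStmt14

open RamificationStmt14 in
theorem stmt14_general {K L 𝕜 : Type*} [Field K] [Field L]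
    [Field 𝕜] [Algebra K L]
    (v : AddValuation K (WithTop ℤ))
    (w : AddValuation L (WithTop ℤ))
    (res : vintegers w →+* 𝕜)
    (hres_ker : ∀ x : vintegers w, res x = 0 ↔ 0 < w (x : L))
    (lift : 𝕜 → K) (hlift_int : ∀ x : 𝕜, 0 ≤ v (lift x))
    (hlift_sect : ∀ x : 𝕜, ∀ hx : algebraMap K L (lift x) ∈ vintegers w,
      res ⟨algebraMap K L (lift x), hx⟩ = x)
    (φ : Polynomial K) (n : ℕ) (hn : 0 < n) (hdeg : φ.natDegree = n)
    (hEis : IsEisenstein v φ)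
    (α : L) (hroot : Polynomial.aeval α φ = 0) (hα : w α = ((1 : ℤ) : WithTop ℤ))
    (hgen : Algebra.adjoin K {α} = ⊤) (hfinrank : Module.finrank K L = n)
    (hcompat : ∀ x : K, w (algebraMap K L x) = n • v x)
    (δ : L) (hδ : w δ = (0 : WithTop ℤ)) (β : L) (hβ : β = δ * α)
    (ψ : Polynomial K) (hψ : ψ = minpoly K β)
    (dbar : 𝕜) (hdbar : 0 < w (δ - algebraMap K L (lift dbar)))
    (x0 x1 : ℕ) (y0 y1 : ℤ) (h e : ℕ)
    (A A' : Polynomial 𝕜)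
    (hA : IsSegmentWithResidual w lift φ α n x0 x1 y0 y1 h e A)
    (hA' : IsSegmentWithResidual w lift ψ β n x0 x1 y0 y1 h e A') :
    (A'.map (algebraMap 𝕜 (AlgebraicClosure 𝕜))).roots =
      Multiset.map (fun z => z / (algebraMap 𝕜 (AlgebraicClosure 𝕜) dbar) ^ h)
        (A.map (algebraMap 𝕜 (AlgebraicClosure 𝕜))).roots := by
  obtain ⟨hx0, hx01, hx1, he, -, -, -, -, hφline, hAdeg, hAres⟩ := hA
  obtain ⟨-, -, -, -, -, hwx0', -, -, hψline, hA'deg, hA'res⟩ := hA'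
  subst hβ hψ
  obtain ⟨c, hc, hcong⟩ :=
    exists_val_rho_sub_ge hcompat hn hfinrank hα hδ hgen hEis hdeg hroot hφline hψline he
  have hlift (r : 𝕜) : HasResidue res (algebraMap K L (lift r)) r :=
    ⟨_, hlift_sect r (by show 0 ≤ w _; rw [hcompat]; exact nsmul_nonneg (hlift_int r) n)⟩
  have hδd := (hlift dbar).of_val_sub_pos hres_ker hdbar
  refine roots_map_eq_of_coeff _ (hδd.ne_zero hres_ker hδ) ?_ hAdeg hA'deg
    (k := n + y0) (c := res ⟨c, hc⟩) fun j hj => ?_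
  · refine ((hlift _).of_val_sub_pos hres_ker (hA'res 0 (Nat.zero_le _))).ne_zero hres_ker ?_
    simp [w.map_mul, hwx0', val_zpow w (show w (δ * α) = ((1 : ℤ) : WithTop ℤ) by
      simp [w.map_mul, hδ, hα])]
  · have hmn : j * e + x0 ≤ n := by
      have := (Nat.mul_le_mul_right e hj).trans (Nat.div_mul_le_self (x1 - x0) e)
      omega
    rw [show (n + y0 : ℤ) - j * h = n - (j * h - y0) by ring]
    refine residue_eq_of_congr hres_ker hα hδ hδd ⟨hc, rfl⟩
      ((hlift _).of_val_sub_pos hres_ker (hAres j hj))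
      ((hlift _).of_val_sub_pos hres_ker (hA'res j hj)) ?_
    rw [show 1 - (j * h - y0 : ℤ) = y0 - j * h + 1 by ring]
    exact hcong j (by omega) hmn

open RamificationStmt14 in
/-- Let `φ ∈ O_K[x]` be Eisenstein with root `α`, `L = K(α)`, `S` a segment of
the ramification polygon of `φ` of slope `−h/e` with residual polynomial `A`.  Let `β = δα`
(`v(δ) = 0`) be another uniformizer of `L` with minimal polynomial `ψ`, and let `A'` be the
residual polynomial of the segment of slope `−h/e` of the ramification polygon of `ψ`.  If
`γ̄_1, …, γ̄_m` are the zeros of `A` in an algebraic closure of the residue field `𝕜`, then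
`γ̄_1/δ̄^h, …, γ̄_m/δ̄^h` are the zeros of `A'` (as multisets, with multiplicity). -/
theorem stmt14 {p : ℕ} (hp : p.Prime) {K L 𝕜 : Type*} [Field K] [CharZero K] [Field L]
    [Field 𝕜] [Algebra K L]
    (v : AddValuation K (WithTop ℤ)) (π : K) (hπ : v π = ((1 : ℤ) : WithTop ℤ))
    (hresidue_char : 0 < v (p : K))
    (w : AddValuation L (WithTop ℤ))
    (res : vintegers w →+* 𝕜) (hres_surj : Function.Surjective res)
    (hres_ker : ∀ x : vintegers w, res x = 0 ↔ 0 < w (x : L))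
    (lift : 𝕜 → K) (hlift_int : ∀ x : 𝕜, 0 ≤ v (lift x))
    (hlift_sect : ∀ x : 𝕜, ∀ hx : algebraMap K L (lift x) ∈ vintegers w,
      res ⟨algebraMap K L (lift x), hx⟩ = x)
    (φ : Polynomial K) (n : ℕ) (hn : 0 < n) (hdeg : φ.natDegree = n)
    (hEis : IsEisenstein v φ)
    (α : L) (hroot : Polynomial.aeval α φ = 0) (hα : w α = ((1 : ℤ) : WithTop ℤ))
    (hgen : Algebra.adjoin K {α} = ⊤) (hfinrank : Module.finrank K L = n)
    (hcompat : ∀ x : K, w (algebraMap K L x) = n • v x)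
    (δ : L) (hδ : w δ = (0 : WithTop ℤ)) (β : L) (hβ : β = δ * α)
    (ψ : Polynomial K) (hψ : ψ = minpoly K β)
    (dbar : 𝕜) (hdbar : 0 < w (δ - algebraMap K L (lift dbar)))
    (x0 x1 : ℕ) (y0 y1 : ℤ) (h e : ℕ)
    (A A' : Polynomial 𝕜)
    (hA : IsSegmentWithResidual w lift φ α n x0 x1 y0 y1 h e A)
    (hA' : IsSegmentWithResidual w lift ψ β n x0 x1 y0 y1 h e A') :
    (A'.map (algebraMap 𝕜 (AlgebraicClosure 𝕜))).roots =
      Multiset.map (fun z => z / (algebraMap 𝕜 (AlgebraicClosure 𝕜) dbar) ^ h)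
        (A.map (algebraMap 𝕜 (AlgebraicClosure 𝕜))).roots :=
  stmt14_general v w res hres_ker lift hlift_int hlift_sect φ n hn hdeg hEis α hroot hα hgen
    hfinrank hcompat δ hδ β hβ ψ hψ dbar hdbar x0 x1 y0 y1 h e A A' hA hA'
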